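/- Let c, C* > 0 and suppose a smooth function λ : ℝ^N \ {0} → ℂ satisfies Re λ(ξ) ≤ −C*|ξ|² and |∂^α_ξ λ(ξ)| ≤ C|ξ|^{2−|α|} for all multi-indices α with |α| ≤ n. Then for every multi-index α with |α| ≤ n and all t > 0, ξ ≠ 0, one has |∂^α_ξ e^{λ(ξ)t}| ≤ C' e^{−(C*/2)|ξ|²t} |ξ|^{−|α|}, with C' depending only on C, C*, N, n. -/

import Mathlib

open scoped BigOperators

/-- The partial derivative ∂_i of a function on ℝ^N. -/
noncomputable def pderiv1 {N : ℕ} {E : Type*} [NormedAddCommGroup E] [NormedSpace ℝ E]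
    (i : Fin N) (f : EuclideanSpace ℝ (Fin N) → E) : EuclideanSpace ℝ (Fin N) → E :=
  fun x => fderiv ℝ f x (EuclideanSpace.single i 1)

/-- The multi-index derivative ∂^α = ∂₁^{α₁} ⋯ ∂_N^{α_N} on ℝ^N. -/
noncomputable def pderivMulti {N : ℕ} {E : Type*} [NormedAddCommGroup E] [NormedSpace ℝ E]
    (α : Fin N → ℕ) (f : EuclideanSpace ℝ (Fin N) → E) : EuclideanSpace ℝ (Fin N) → E :=
  (List.finRange N).foldr (fun i g => (pderiv1 i)^[α i] g) f

namespace Stmt18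
variable {N : ℕ}

/-- iterated first-order derivatives along a word -/
noncomputable def D (w : List (Fin N)) (f : EuclideanSpace ℝ (Fin N) → ℂ) :
    EuclideanSpace ℝ (Fin N) → ℂ :=
  w.foldr (fun i g => pderiv1 i g) f

@[simp] lemma D_nil (f : EuclideanSpace ℝ (Fin N) → ℂ) : D [] f = f := rfl
@[simp] lemma D_cons (i : Fin N) (w : List (Fin N)) (f) :
    D (i :: w) f = pderiv1 i (D w f) := rfl

lemma D_append (u v : List (Fin N)) (f) : D (u ++ v) f = D u (D v f) := by
  simp [D, List.foldr_append]

lemma D_replicate (k : ℕ) (i : Fin N) (f) :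
    D (List.replicate k i) f = (pderiv1 i)^[k] f := by
  induction k with
  | zero => rfl
  | succ k ih => rw [List.replicate_succ]; simp [ih, Function.iterate_succ_apply']

/-- the canonical (sorted) word of a multi-index -/
def word (α : Fin N → ℕ) : List (Fin N) :=
  (List.finRange N).flatMap fun j => List.replicate (α j) j

lemma pderivMulti_eq_D (α : Fin N → ℕ) (f) : pderivMulti α f = D (word α) f := by
  suffices h : ∀ L : List (Fin N),
      L.foldr (fun i g => (pderiv1 i)^[α i] g) f
        = D (L.flatMap fun j => List.replicate (α j) j) f by
    exact h _
  intro L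
  induction L with
  | nil => rfl
  | cons j L ih => simp [List.flatMap_cons, D_append, ih, D_replicate]

lemma word_length (α : Fin N → ℕ) : (word α).length = ∑ i, α i := by
  simp [word, List.length_flatMap, Fin.sum_univ_def, Function.comp_def]

lemma word_sorted (α : Fin N → ℕ) : (word α).Pairwise (· ≤ ·) := by
  have h : ∀ L : List (Fin N), L.Pairwise (· < ·) →
      (L.flatMap fun j => List.replicate (α j) j).Pairwise (· ≤ ·) := by
    intro L hL
    induction L with
    | nil => simp [List.Pairwise.nil]
    | cons j L ih =>
      rw [List.flatMap_cons]
      rw [List.pairwise_append]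
      refine ⟨List.pairwise_replicate.mpr (Or.inr le_rfl), ih hL.of_cons, ?_⟩
      intro x hx y hy
      rw [List.eq_of_mem_replicate hx]
      obtain ⟨k, hk, hy⟩ := List.mem_flatMap.mp hy
      rw [List.eq_of_mem_replicate hy]
      exact (List.rel_of_pairwise_cons hL hk).le
  exact h _ (List.pairwise_lt_finRange N)

lemma sorted_eq_word_count (w : List (Fin N)) (hw : w.Pairwise (· ≤ ·)) :
    w = word (fun j => w.count j) := by
  refine List.Perm.eq_of_pairwise' hw (word_sorted _) ?_
  rw [List.perm_iff_count]
  intro a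
  simp only [word, List.count_flatMap]
  have : (List.map (List.count a ∘ fun j => List.replicate (List.count j w) j)
      (List.finRange N)).sum
      = ∑ j : Fin N, if j = a then List.count j w else 0 := by
    rw [Fin.sum_univ_def]
    congr 1
    apply List.map_congr_left
    intro j _
    simp [List.count_replicate]
  rw [this, Finset.sum_ite_eq' Finset.univ a fun j => List.count j w]
  simp


section Calc
variable {f g : EuclideanSpace ℝ (Fin N) → ℂ} {s : Set (EuclideanSpace ℝ (Fin N))}

lemma contDiffOn_pderiv1 (i : Fin N) (hs : IsOpen s) (hf : ContDiffOn ℝ (⊤ : ℕ∞) f s) :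
    ContDiffOn ℝ (⊤ : ℕ∞) (pderiv1 i f) s := by
  have h := ContDiffOn.fderiv_of_isOpen (m := (⊤ : ℕ∞)) hf hs (by simp)
  exact h.clm_apply contDiffOn_const

lemma contDiffOn_D (w : List (Fin N)) (hs : IsOpen s) (hf : ContDiffOn ℝ (⊤ : ℕ∞) f s) :
    ContDiffOn ℝ (⊤ : ℕ∞) (D w f) s := by
  induction w with
  | nil => exact hf
  | cons i w ih => exact contDiffOn_pderiv1 i hs ih

lemma differentiableAt_of_contDiffOn (hs : IsOpen s) (hf : ContDiffOn ℝ (⊤ : ℕ∞) f s)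
    {x : EuclideanSpace ℝ (Fin N)} (hx : x ∈ s) : DifferentiableAt ℝ f x :=
  ((hf x hx).contDiffAt (hs.mem_nhds hx)).differentiableAt (by simp)

lemma pderiv1_mul {x : EuclideanSpace ℝ (Fin N)} (i : Fin N)
    (hf : DifferentiableAt ℝ f x) (hg : DifferentiableAt ℝ g x) :
    pderiv1 i (fun y => f y * g y) x = pderiv1 i f x * g x + f x * pderiv1 i g x := by
  simp only [pderiv1]
  rw [fderiv_fun_mul hf hg]
  simp only [ContinuousLinearMap.add_apply, ContinuousLinearMap.smul_apply, smul_eq_mul]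
  ring

lemma pderiv1_exp_mul (t : ℝ) {x : EuclideanSpace ℝ (Fin N)}
    (hf : DifferentiableAt ℝ f x) :
    pderiv1 i (fun y => Complex.exp (f y * t)) x
      = pderiv1 i f x * t * Complex.exp (f x * t) := by
  simp only [pderiv1]
  have h1 : HasFDerivAt (fun y => f y * (t:ℂ)) ((t:ℂ) • fderiv ℝ f x) x :=
    hf.hasFDerivAt.mul_const (t:ℂ)
  have h2 : HasFDerivAt (fun y => Complex.exp (f y * t))
      (Complex.exp (f x * t) • ((t:ℂ) • fderiv ℝ f x)) x := by
    have := (Complex.hasDerivAt_exp (f x * t)).comp_hasFDerivAt x h1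
    simpa [Function.comp_def] using this
  rw [h2.fderiv]
  simp [smul_eq_mul]
  ring

end Calc

section Poly
variable (lam : EuclideanSpace ℝ (Fin N) → ℂ)

noncomputable def prodD (ws : List (List (Fin N))) (ξ : EuclideanSpace ℝ (Fin N)) : ℂ :=
  (ws.map (fun w => D w lam ξ)).prod

noncomputable def tval (t : ℝ) (ws : List (List (Fin N))) (ξ : EuclideanSpace ℝ (Fin N)) : ℂ :=
  (t : ℂ) ^ ws.length * prodD lam ws ξ

noncomputable def val (t : ℝ) (P : List (List (List (Fin N)))) (ξ : EuclideanSpace ℝ (Fin N)) : ℂ :=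
  (P.map (fun ws => tval lam t ws ξ)).sum

def prodRule (i : Fin N) : List (List (Fin N)) → List (List (List (Fin N)))
  | [] => []
  | w :: ws => ((i :: w) :: ws) :: (prodRule i ws).map (fun ws' => w :: ws')

def step (i : Fin N) (P : List (List (List (Fin N)))) : List (List (List (Fin N))) :=
  P.flatMap fun ws => ([i] :: ws) :: prodRule i ws

lemma prodRule_length (i : Fin N) (ws : List (List (Fin N))) :
    ∀ ws' ∈ prodRule i ws, ws'.length = ws.length := by
  induction ws with
  | nil => simp [prodRule]
  | cons w ws ih =>
    intro ws' h
    rcases List.mem_cons.mp h with h | h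
    · simp [h]
    · obtain ⟨ws'', h2, rfl⟩ := List.mem_map.mp h
      simp [ih ws'' h2]

lemma prodRule_lensum (i : Fin N) (ws : List (List (Fin N))) :
    ∀ ws' ∈ prodRule i ws, (ws'.map List.length).sum = (ws.map List.length).sum + 1 := by
  induction ws with
  | nil => simp [prodRule]
  | cons w ws ih =>
    intro ws' h
    rcases List.mem_cons.mp h with h | h
    · subst h; simp; ring
    · obtain ⟨ws'', h2, rfl⟩ := List.mem_map.mp h
      simp [ih ws'' h2]; ring

lemma prodRule_mem (i : Fin N) (ws : List (List (Fin N))) :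
    ∀ ws' ∈ prodRule i ws, ∀ w' ∈ ws', w' ∈ ws ∨ ∃ w ∈ ws, w' = i :: w := by
  induction ws with
  | nil => simp [prodRule]
  | cons w ws ih =>
    intro ws' h
    rcases List.mem_cons.mp h with h | h
    · subst h
      intro w' hw'
      rcases List.mem_cons.mp hw' with h | h
      · exact Or.inr ⟨w, List.mem_cons_self .., h⟩
      · exact Or.inl (List.mem_cons_of_mem _ h)
    · obtain ⟨ws'', h2, rfl⟩ := List.mem_map.mp h
      intro w' hw'
      rcases List.mem_cons.mp hw' with h | h
      · exact Or.inl (h ▸ List.mem_cons_self ..)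
      · rcases ih ws'' h2 w' h with h | ⟨w₀, hw₀, rfl⟩
        · exact Or.inl (List.mem_cons_of_mem _ h)
        · exact Or.inr ⟨w₀, List.mem_cons_of_mem _ hw₀, rfl⟩

variable {lam}
variable (hsmooth : ContDiffOn ℝ (⊤ : ℕ∞) lam {(0 : EuclideanSpace ℝ (Fin N))}ᶜ)
include hsmooth

lemma diff_D (w : List (Fin N)) {ξ : EuclideanSpace ℝ (Fin N)} (hξ : ξ ≠ 0) :
    DifferentiableAt ℝ (D w lam) ξ :=
  differentiableAt_of_contDiffOn isOpen_compl_singleton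
    (contDiffOn_D w isOpen_compl_singleton hsmooth) hξ

lemma diff_prodD (ws : List (List (Fin N))) {ξ : EuclideanSpace ℝ (Fin N)} (hξ : ξ ≠ 0) :
    DifferentiableAt ℝ (prodD lam ws) ξ := by
  induction ws with
  | nil => exact differentiableAt_const 1
  | cons w ws ih =>
    have : prodD lam (w :: ws) = fun ζ => D w lam ζ * prodD lam ws ζ := by
      funext ζ; simp [prodD]
    rw [this]
    exact (diff_D hsmooth w hξ).mul ih

lemma diff_val (t : ℝ) (P : List (List (List (Fin N)))) {ξ : EuclideanSpace ℝ (Fin N)}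
    (hξ : ξ ≠ 0) : DifferentiableAt ℝ (val lam t P) ξ := by
  induction P with
  | nil => exact differentiableAt_const 0
  | cons ws P ih =>
    have : val lam t (ws :: P) = fun ζ => tval lam t ws ζ + val lam t P ζ := by
      funext ζ; simp [val]
    rw [this]
    exact ((differentiableAt_const _).mul (diff_prodD hsmooth ws hξ)).add ih

lemma pderiv1_prodD (i : Fin N) (ws : List (List (Fin N)))
    {ξ : EuclideanSpace ℝ (Fin N)} (hξ : ξ ≠ 0) :
    pderiv1 i (prodD lam ws) ξ = ((prodRule i ws).map (fun ws' => prodD lam ws' ξ)).sum := by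
  induction ws with
  | nil =>
    have : prodD lam ([] : List (List (Fin N))) = fun _ => 1 := by funext ζ; simp [prodD]
    simp [this, prodRule, pderiv1]
  | cons w ws ih =>
    have hw : prodD lam (w :: ws) = fun ζ => D w lam ζ * prodD lam ws ζ := by
      funext ζ; simp [prodD]
    rw [hw, pderiv1_mul i (diff_D hsmooth w hξ) (diff_prodD hsmooth ws hξ)]
    have h1 : pderiv1 i (D w lam) ξ = D (i :: w) lam ξ := rfl
    rw [h1, ih]
    simp only [prodRule, List.map_cons, List.sum_cons, List.map_map]
    have h2 : prodD lam ((i :: w) :: ws) ξ = D (i :: w) lam ξ * prodD lam ws ξ := by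
      simp [prodD]
    rw [h2]
    have h3 : List.map ((fun ws' => prodD lam ws' ξ) ∘ fun ws' => w :: ws') (prodRule i ws)
        = List.map (fun x => D w lam ξ * prodD lam x ξ) (prodRule i ws) := by
      apply List.map_congr_left; intro ws' _; simp [prodD, Function.comp]
    rw [h3, List.sum_map_mul_left]

lemma pderiv1_exp_val (i : Fin N) (t : ℝ) (P : List (List (List (Fin N))))
    {ξ : EuclideanSpace ℝ (Fin N)} (hξ : ξ ≠ 0) :
    pderiv1 i (fun ζ => Complex.exp (lam ζ * t) * val lam t P ζ) ξ
      = Complex.exp (lam ξ * t) * val lam t (step i P) ξ := by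
  induction P with
  | nil =>
    have : (fun ζ : EuclideanSpace ℝ (Fin N) => Complex.exp (lam ζ * t) * val lam t [] ζ)
        = fun _ => 0 := by funext ζ; simp [val]
    simp [this, step, val, pderiv1]
  | cons ws P ih =>
    have hsplit : (fun ζ : EuclideanSpace ℝ (Fin N) =>
        Complex.exp (lam ζ * t) * val lam t (ws :: P) ζ)
        = fun ζ => (Complex.exp (lam ζ * t) * tval lam t ws ζ)
            + (Complex.exp (lam ζ * t) * val lam t P ζ) := by
      funext ζ; simp [val]; ring
    have hde : DifferentiableAt ℝ (fun ζ => Complex.exp (lam ζ * t)) ξ := by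
      have h1 : DifferentiableAt ℝ (fun ζ => lam ζ * (t:ℂ)) ξ :=
        (diff_D hsmooth [] hξ).mul_const _
      exact (Complex.differentiable_exp (𝕜 := ℂ)).differentiableAt.restrictScalars ℝ |>.comp ξ h1
    have hd1 : DifferentiableAt ℝ (fun ζ => Complex.exp (lam ζ * t) * tval lam t ws ζ) ξ :=
      hde.mul ((differentiableAt_const _).mul (diff_prodD hsmooth ws hξ))
    have hd2 : DifferentiableAt ℝ (fun ζ => Complex.exp (lam ζ * t) * val lam t P ζ) ξ :=
      hde.mul (diff_val hsmooth t P hξ)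
    rw [hsplit]
    have hadd : pderiv1 i (fun ζ => (Complex.exp (lam ζ * t) * tval lam t ws ζ)
            + (Complex.exp (lam ζ * t) * val lam t P ζ)) ξ
        = pderiv1 i (fun ζ => Complex.exp (lam ζ * t) * tval lam t ws ζ) ξ
          + pderiv1 i (fun ζ => Complex.exp (lam ζ * t) * val lam t P ζ) ξ := by
      simp only [pderiv1]
      rw [fderiv_fun_add hd1 hd2]
      simp
    rw [hadd, ih]
    -- single term
    have hterm : pderiv1 i (fun ζ => Complex.exp (lam ζ * t) * tval lam t ws ζ) ξ
        = Complex.exp (lam ξ * t) *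
            (tval lam t ([i] :: ws) ξ
              + ((prodRule i ws).map (fun ws' => tval lam t ws' ξ)).sum) := by
      have h1 : (fun ζ => Complex.exp (lam ζ * t) * tval lam t ws ζ)
          = fun ζ => Complex.exp (lam ζ * t) * ((t:ℂ) ^ ws.length * prodD lam ws ζ) := rfl
      rw [h1, pderiv1_mul i hde ((diff_prodD hsmooth ws hξ).const_mul _)]
      have h2 : pderiv1 i (fun ζ => Complex.exp (lam ζ * t)) ξ
          = pderiv1 i lam ξ * t * Complex.exp (lam ξ * t) :=
        pderiv1_exp_mul t (diff_D hsmooth [] hξ)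
      have h3 : pderiv1 i (fun ζ => (t:ℂ) ^ ws.length * prodD lam ws ζ) ξ
          = (t:ℂ) ^ ws.length * pderiv1 i (prodD lam ws) ξ := by
        simp only [pderiv1]
        rw [fderiv_const_mul (diff_prodD hsmooth ws hξ)]
        simp
      rw [h2, h3, pderiv1_prodD hsmooth i ws hξ]
      have h4 : tval lam t ([i] :: ws) ξ
          = (t:ℂ) ^ (ws.length + 1) * (D [i] lam ξ * prodD lam ws ξ) := by
        simp [tval, prodD]
      have h5 : ((prodRule i ws).map (fun ws' => tval lam t ws' ξ)).sum
          = (t:ℂ) ^ ws.length * ((prodRule i ws).map (fun ws' => prodD lam ws' ξ)).sum := by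
        rw [← List.sum_map_mul_left]
        congr 1
        apply List.map_congr_left
        intro ws' hws'
        simp [tval, prodRule_length i ws ws' hws']
      rw [h4, h5]
      have : pderiv1 i lam ξ = D [i] lam ξ := rfl
      rw [this]
      ring
    rw [hterm]
    have hstep : val lam t (step i (ws :: P)) ξ
        = (tval lam t ([i] :: ws) ξ
            + ((prodRule i ws).map (fun ws' => tval lam t ws' ξ)).sum)
          + val lam t (step i P) ξ := by
      simp only [step, List.flatMap_cons, val, List.map_append, List.sum_append, List.map_cons,
        List.sum_cons]
    rw [hstep]
    ring

theorem rep (u : List (Fin N)) (hu : u.Pairwise (· ≤ ·)) :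
    ∃ P : List (List (List (Fin N))),
      (∀ ws ∈ P, ((ws.map List.length).sum = u.length) ∧
        ∀ w ∈ ws, w ≠ [] ∧ w.Pairwise (· ≤ ·) ∧ ∀ j ∈ w, j ∈ u) ∧
      ∀ t : ℝ, ∀ ξ : EuclideanSpace ℝ (Fin N), ξ ≠ 0 →
        D u (fun ζ => Complex.exp (lam ζ * t)) ξ
          = Complex.exp (lam ξ * t) * val lam t P ξ := by
  induction u with
  | nil =>
    refine ⟨[[]], ?_, ?_⟩
    · intro ws hws
      simp only [List.mem_singleton] at hws
      subst hws
      simp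
    · intro t ξ hξ
      simp [val, tval, prodD]
  | cons i u ih =>
    obtain ⟨P, hP, heq⟩ := ih hu.of_cons
    have hile : ∀ b ∈ u, i ≤ b := fun b hb => List.rel_of_pairwise_cons hu hb
    refine ⟨step i P, ?_, ?_⟩
    · intro ws' hws'
      obtain ⟨ws, hws, hmem⟩ := List.mem_flatMap.mp hws'
      obtain ⟨hlen, hinv⟩ := hP ws hws
      have hsortnew : ∀ w ∈ ws, ((i :: w).Pairwise (· ≤ ·) ∧ ∀ j ∈ i :: w, j ∈ i :: u) ∧
          (w.Pairwise (· ≤ ·) ∧ ∀ j ∈ w, j ∈ i :: u) := by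
        intro w hw
        obtain ⟨hne, hsort, hjmem⟩ := hinv w hw
        refine ⟨⟨List.pairwise_cons.mpr ⟨fun b hb => hile b (hjmem b hb), hsort⟩, ?_⟩,
          hsort, fun j hj => List.mem_cons_of_mem _ (hjmem j hj)⟩
        intro j hj
        rcases List.mem_cons.mp hj with h | h
        · exact h ▸ List.mem_cons_self ..
        · exact List.mem_cons_of_mem _ (hjmem j h)
      rcases List.mem_cons.mp hmem with h | h
      · subst h
        constructor
        · simp [hlen]; ring
        · intro w hw
          rcases List.mem_cons.mp hw with h | h
          · subst h
            exact ⟨by simp, List.pairwise_singleton _ i, by simp⟩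
          · obtain ⟨hne, _, _⟩ := hinv w h
            exact ⟨hne, (hsortnew w h).2⟩
      · constructor
        · rw [prodRule_lensum i ws ws' h, hlen]; simp
        · intro w' hw'
          rcases prodRule_mem i ws ws' h w' hw' with hmw | ⟨w, hw, rfl⟩
          · obtain ⟨hne, _, _⟩ := hinv w' hmw
            exact ⟨hne, (hsortnew w' hmw).2⟩
          · exact ⟨by simp, (hsortnew w hw).1⟩
    · intro t ξ hξ
      have hDu : D (i :: u) (fun ζ => Complex.exp (lam ζ * t)) ξ
          = pderiv1 i (D u (fun ζ => Complex.exp (lam ζ * t))) ξ := rfl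
      rw [hDu]
      have hev : D u (fun ζ => Complex.exp (lam ζ * t))
          =ᶠ[nhds ξ] fun ζ => Complex.exp (lam ζ * t) * val lam t P ζ := by
        filter_upwards [isOpen_compl_singleton.mem_nhds hξ] with ζ hζ
        exact heq t ζ hζ
      have : pderiv1 i (D u (fun ζ => Complex.exp (lam ζ * t))) ξ
          = pderiv1 i (fun ζ => Complex.exp (lam ζ * t) * val lam t P ζ) ξ := by
        simp only [pderiv1]
        rw [hev.fderiv_eq]
      rw [this, pderiv1_exp_val hsmooth i t P hξ]

end Poly

section Bounds

lemma sbound (n k : ℕ) (hk : k ≤ n) (C Cstar : ℝ) (hC : 0 < C) (hCstar : 0 < Cstar)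
    (s : ℝ) (hs : 0 ≤ s) :
    C ^ k * s ^ k * Real.exp (-(Cstar/2) * s)
      ≤ (1+C) ^ n * (n.factorial : ℝ) * (1 + 2/Cstar) ^ n := by
  have hx : 0 ≤ Cstar/2 * s := by positivity
  have h := Real.pow_div_factorial_le_exp (x := Cstar/2 * s) hx k
  have hsk : s ^ k ≤ (k.factorial : ℝ) * (2/Cstar) ^ k * Real.exp (Cstar/2 * s) := by
    rw [div_le_iff₀ (by positivity : (0:ℝ) < (k.factorial : ℝ))] at h
    rw [mul_pow] at h
    calc s ^ k = (2/Cstar) ^ k * ((Cstar/2) ^ k * s ^ k) := by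
          rw [← mul_assoc, ← mul_pow]
          have : (2/Cstar) * (Cstar/2) = 1 := by field_simp
          rw [this, one_pow, one_mul]
      _ ≤ (2/Cstar) ^ k * (Real.exp (Cstar/2 * s) * (k.factorial : ℝ)) :=
          mul_le_mul_of_nonneg_left h (by positivity)
      _ = (k.factorial : ℝ) * (2/Cstar) ^ k * Real.exp (Cstar/2 * s) := by ring
  calc C ^ k * s ^ k * Real.exp (-(Cstar/2) * s)
      ≤ C ^ k * ((k.factorial : ℝ) * (2/Cstar) ^ k * Real.exp (Cstar/2 * s))
          * Real.exp (-(Cstar/2) * s) := by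
        apply mul_le_mul_of_nonneg_right _ (Real.exp_pos _).le
        exact mul_le_mul_of_nonneg_left hsk (by positivity)
    _ = C ^ k * (k.factorial : ℝ) * (2/Cstar) ^ k
          * Real.exp (Cstar/2 * s + -(Cstar/2) * s) := by
        rw [Real.exp_add]; ring
    _ = C ^ k * (k.factorial : ℝ) * (2/Cstar) ^ k := by
        rw [show Cstar/2 * s + -(Cstar/2) * s = 0 by ring, Real.exp_zero, mul_one]
    _ ≤ (1+C) ^ n * (n.factorial : ℝ) * (1 + 2/Cstar) ^ n := by
        have h1 : C ^ k ≤ (1+C) ^ n :=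
          le_trans (pow_le_pow_left₀ hC.le (by linarith) k)
            (pow_le_pow_right₀ (by linarith) hk)
        have h2 : (k.factorial : ℝ) ≤ (n.factorial : ℝ) :=
          Nat.cast_le.mpr (Nat.factorial_le hk)
        have h3 : (2/Cstar) ^ k ≤ (1 + 2/Cstar) ^ n := by
          have hq : (0:ℝ) ≤ 2/Cstar := by positivity
          exact le_trans (pow_le_pow_left₀ hq (by linarith) k)
            (pow_le_pow_right₀ (by linarith) hk)
        exact mul_le_mul (mul_le_mul h1 h2 (by positivity) (by positivity)) h3
          (by positivity) (by positivity)

lemma mem_le_sum {a : ℕ} {l : List ℕ} (h : a ∈ l) : a ≤ l.sum := by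
  induction l with
  | nil => simp at h
  | cons b l ih =>
    rcases List.mem_cons.mp h with h | h
    · subst h; simp
    · simp only [List.sum_cons]; exact le_add_of_nonneg_of_le (Nat.zero_le b) (ih h)

lemma length_le_sum_lengths {γ : Type*} (ws : List (List γ)) (h : ∀ w ∈ ws, w ≠ []) :
    ws.length ≤ (ws.map List.length).sum := by
  induction ws with
  | nil => simp
  | cons w ws ih =>
    simp only [List.map_cons, List.sum_cons, List.length_cons]
    have h1 : 0 < w.length := List.length_pos_iff.mpr (h w (List.mem_cons_self ..))
    have h2 := ih (fun w hw => h w (List.mem_cons_of_mem _ hw))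
    omega

variable {N : ℕ} {n : ℕ} {C : ℝ} {lam : EuclideanSpace ℝ (Fin N) → ℂ}

lemma normD_bound
    (hder : ∀ α : Fin N → ℕ, (∑ i, α i) ≤ n →
      ∀ ξ : EuclideanSpace ℝ (Fin N), ξ ≠ 0 →
        ‖pderivMulti α lam ξ‖ ≤ C * ‖ξ‖ ^ ((2 : ℝ) - (∑ i, α i : ℕ)))
    {w : List (Fin N)} (hw : w.Pairwise (· ≤ ·)) (hn : w.length ≤ n)
    {ξ : EuclideanSpace ℝ (Fin N)} (hξ : ξ ≠ 0) :
    ‖D w lam ξ‖ ≤ C * ‖ξ‖ ^ ((2 : ℝ) - (w.length : ℕ)) := by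
  have hα := sorted_eq_word_count w hw
  set α' : Fin N → ℕ := fun j => w.count j with hα'def
  have h1 : pderivMulti α' lam = D w lam := by rw [pderivMulti_eq_D, ← hα]
  have h2 : (∑ i, α' i) = w.length := by
    conv_rhs => rw [hα]
    exact (word_length α').symm
  have := hder α' (h2 ▸ hn) ξ hξ
  rw [h1, h2] at this
  exact this

lemma prodD_bound (hC : 0 < C)
    (hder : ∀ α : Fin N → ℕ, (∑ i, α i) ≤ n →
      ∀ ξ : EuclideanSpace ℝ (Fin N), ξ ≠ 0 →
        ‖pderivMulti α lam ξ‖ ≤ C * ‖ξ‖ ^ ((2 : ℝ) - (∑ i, α i : ℕ)))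
    (ws : List (List (Fin N))) (hws : ∀ w ∈ ws, w.Pairwise (· ≤ ·) ∧ w.length ≤ n)
    {ξ : EuclideanSpace ℝ (Fin N)} (hξ : ξ ≠ 0) :
    ‖prodD lam ws ξ‖ ≤ C ^ ws.length
      * ‖ξ‖ ^ ((2 * ws.length : ℝ) - ((ws.map List.length).sum : ℕ)) := by
  have hξpos : 0 < ‖ξ‖ := norm_pos_iff.mpr hξ
  induction ws with
  | nil => simp [prodD]
  | cons w ws ih =>
    have hcons : prodD lam (w :: ws) ξ = D w lam ξ * prodD lam ws ξ := by simp [prodD]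
    rw [hcons, norm_mul]
    have h1 := normD_bound hder (hws w (List.mem_cons_self ..)).1 (hws w (List.mem_cons_self ..)).2 hξ
    have h2 := ih (fun w hw => hws w (List.mem_cons_of_mem _ hw))
    calc ‖D w lam ξ‖ * ‖prodD lam ws ξ‖
        ≤ (C * ‖ξ‖ ^ ((2 : ℝ) - (w.length : ℕ)))
          * (C ^ ws.length * ‖ξ‖ ^ ((2 * ws.length : ℝ) - ((ws.map List.length).sum : ℕ))) :=
          mul_le_mul h1 h2 (norm_nonneg _) (by positivity)
      _ = C ^ (w :: ws).length
          * ‖ξ‖ ^ ((2 * (w :: ws).length : ℝ) - (((w :: ws).map List.length).sum : ℕ)) := by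
          rw [show (C * ‖ξ‖ ^ ((2 : ℝ) - (w.length : ℕ)))
              * (C ^ ws.length * ‖ξ‖ ^ ((2 * ws.length : ℝ) - ((ws.map List.length).sum : ℕ)))
              = (C * C ^ ws.length) * (‖ξ‖ ^ ((2 : ℝ) - (w.length : ℕ))
                * ‖ξ‖ ^ ((2 * ws.length : ℝ) - ((ws.map List.length).sum : ℕ))) by ring]
          rw [← Real.rpow_add hξpos]
          rw [List.length_cons, pow_succ]
          congr 1
          · ring
          · congr 1
            push_cast [List.map_cons, List.sum_cons]
            ring

lemma norm_list_sum_le (l : List ℂ) : ‖l.sum‖ ≤ (l.map fun z => ‖z‖).sum := by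
  induction l with
  | nil => simp
  | cons a l ih =>
    simp only [List.sum_cons, List.map_cons]
    exact (norm_add_le _ _).trans (add_le_add le_rfl ih)

lemma termBound {n : ℕ} {C Cstar : ℝ} {lam : EuclideanSpace ℝ (Fin N) → ℂ}
    (hC : 0 < C) (hCstar : 0 < Cstar)
    (hder : ∀ α : Fin N → ℕ, (∑ i, α i) ≤ n →
      ∀ ξ : EuclideanSpace ℝ (Fin N), ξ ≠ 0 →
        ‖pderivMulti α lam ξ‖ ≤ C * ‖ξ‖ ^ ((2 : ℝ) - (∑ i, α i : ℕ)))
    {m : ℕ} (hm : m ≤ n)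
    (ws : List (List (Fin N))) (hsum : (ws.map List.length).sum = m)
    (hws : ∀ w ∈ ws, w ≠ [] ∧ w.Pairwise (· ≤ ·))
    {t : ℝ} (ht : 0 < t) {ξ : EuclideanSpace ℝ (Fin N)} (hξ : ξ ≠ 0) :
    Real.exp (-Cstar * ‖ξ‖ ^ 2 * t) * ‖tval lam t ws ξ‖
      ≤ ((1+C) ^ n * (n.factorial : ℝ) * (1 + 2/Cstar) ^ n)
        * Real.exp (-(Cstar/2) * ‖ξ‖ ^ 2 * t) * ‖ξ‖ ^ (-(m:ℝ)) := by
  set k := ws.length with hkdef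
  have hξpos : 0 < ‖ξ‖ := norm_pos_iff.mpr hξ
  have hk : k ≤ m := hsum ▸ length_le_sum_lengths ws (fun w hw => (hws w hw).1)
  have hkn : k ≤ n := hk.trans hm
  have hwn : ∀ w ∈ ws, w.Pairwise (· ≤ ·) ∧ w.length ≤ n := by
    intro w hw
    refine ⟨(hws w hw).2, ?_⟩
    have h1 : w.length ∈ ws.map List.length := List.mem_map_of_mem hw
    exact le_trans (le_trans (mem_le_sum h1) (le_of_eq hsum)) hm
  have hprod := prodD_bound hC hder ws hwn hξ
  rw [hsum] at hprod
  have htv : ‖tval lam t ws ξ‖ = t ^ k * ‖prodD lam ws ξ‖ := by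
    rw [tval, norm_mul, norm_pow, Complex.norm_real, Real.norm_eq_abs, abs_of_pos ht]
  have hexp2 : ‖ξ‖ ^ ((2 * k : ℝ) - (m:ℕ)) = (‖ξ‖ ^ 2) ^ k * ‖ξ‖ ^ (-(m:ℝ)) := by
    rw [show ((2 * k : ℝ) - (m:ℕ)) = ((2*k : ℕ) : ℝ) + (-(m:ℝ)) by push_cast; ring]
    rw [Real.rpow_add hξpos, Real.rpow_natCast, pow_mul]
  have hbound : ‖tval lam t ws ξ‖ ≤ t ^ k * (C ^ k * ((‖ξ‖ ^ 2) ^ k * ‖ξ‖ ^ (-(m:ℝ)))) := by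
    rw [htv, ← hexp2]
    exact mul_le_mul_of_nonneg_left hprod (by positivity)
  calc Real.exp (-Cstar * ‖ξ‖ ^ 2 * t) * ‖tval lam t ws ξ‖
      ≤ Real.exp (-Cstar * ‖ξ‖ ^ 2 * t)
          * (t ^ k * (C ^ k * ((‖ξ‖ ^ 2) ^ k * ‖ξ‖ ^ (-(m:ℝ))))) :=
        mul_le_mul_of_nonneg_left hbound (Real.exp_pos _).le
    _ = (C ^ k * (‖ξ‖ ^ 2 * t) ^ k * Real.exp (-(Cstar/2) * (‖ξ‖ ^ 2 * t)))
          * Real.exp (-(Cstar/2) * ‖ξ‖ ^ 2 * t) * ‖ξ‖ ^ (-(m:ℝ)) := by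
        rw [show -Cstar * ‖ξ‖ ^ 2 * t
            = (-(Cstar/2) * (‖ξ‖ ^ 2 * t)) + (-(Cstar/2) * ‖ξ‖ ^ 2 * t) by ring,
          Real.exp_add, mul_pow]
        ring
    _ ≤ ((1+C) ^ n * (n.factorial : ℝ) * (1 + 2/Cstar) ^ n)
          * Real.exp (-(Cstar/2) * ‖ξ‖ ^ 2 * t) * ‖ξ‖ ^ (-(m:ℝ)) := by
        have hsb := sbound n k hkn C Cstar hC hCstar (‖ξ‖ ^ 2 * t) (by positivity)
        exact mul_le_mul_of_nonneg_right
          (mul_le_mul_of_nonneg_right hsb (Real.exp_pos _).le)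
          (Real.rpow_nonneg hξpos.le _)

end Bounds

end Stmt18

/-- If λ : ℝ^N∖{0} → ℂ is smooth with Re λ(ξ) ≤ -C*|ξ|² and
|∂^α λ(ξ)| ≤ C|ξ|^{2-|α|} for |α| ≤ n, then
|∂^α e^{λ(ξ)t}| ≤ C' e^{-(C*/2)|ξ|²t} |ξ|^{-|α|} for all |α| ≤ n, t > 0, ξ ≠ 0. -/
theorem stmt18 {N : ℕ} (n : ℕ) (C Cstar : ℝ) (hC : 0 < C) (hCstar : 0 < Cstar)
    (lam : EuclideanSpace ℝ (Fin N) → ℂ)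
    (hsmooth : ContDiffOn ℝ (⊤ : ℕ∞) lam {(0 : EuclideanSpace ℝ (Fin N))}ᶜ)
    (hre : ∀ ξ : EuclideanSpace ℝ (Fin N), ξ ≠ 0 → (lam ξ).re ≤ -Cstar * ‖ξ‖ ^ 2)
    (hder : ∀ α : Fin N → ℕ, (∑ i, α i) ≤ n →
      ∀ ξ : EuclideanSpace ℝ (Fin N), ξ ≠ 0 →
        ‖pderivMulti α lam ξ‖ ≤ C * ‖ξ‖ ^ ((2 : ℝ) - (∑ i, α i : ℕ))) :
    ∃ C' : ℝ, 0 < C' ∧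
      ∀ α : Fin N → ℕ, (∑ i, α i) ≤ n →
        ∀ t : ℝ, 0 < t → ∀ ξ : EuclideanSpace ℝ (Fin N), ξ ≠ 0 →
          ‖pderivMulti α (fun ζ => Complex.exp (lam ζ * t)) ξ‖ ≤
            C' * Real.exp (-(Cstar / 2) * ‖ξ‖ ^ 2 * t) * ‖ξ‖ ^ (-((∑ i, α i : ℕ) : ℝ)) := by
  classical
  set B : ℝ := (1+C) ^ n * (n.factorial : ℝ) * (1 + 2/Cstar) ^ n with hBdef
  have hB : 0 < B := by positivity
  have key : ∀ α : Fin N → ℕ, ∃ Cα : ℝ, 0 < Cα ∧ ((∑ i, α i) ≤ n →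
      ∀ t : ℝ, 0 < t → ∀ ξ : EuclideanSpace ℝ (Fin N), ξ ≠ 0 →
        ‖pderivMulti α (fun ζ => Complex.exp (lam ζ * t)) ξ‖ ≤
          Cα * Real.exp (-(Cstar / 2) * ‖ξ‖ ^ 2 * t) * ‖ξ‖ ^ (-((∑ i, α i : ℕ) : ℝ))) := by
    intro α
    obtain ⟨P, hP, heq⟩ := Stmt18.rep hsmooth (Stmt18.word α) (Stmt18.word_sorted α)
    refine ⟨P.length * B + 1, by positivity, ?_⟩
    intro hα t ht ξ hξ
    have hm : (Stmt18.word α).length = ∑ i, α i := Stmt18.word_length α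
    have hξpos : 0 < ‖ξ‖ := norm_pos_iff.mpr hξ
    rw [Stmt18.pderivMulti_eq_D, heq t ξ hξ, norm_mul]
    have hexp1 : ‖Complex.exp (lam ξ * t)‖ ≤ Real.exp (-Cstar * ‖ξ‖ ^ 2 * t) := by
      rw [Complex.norm_exp]
      apply Real.exp_le_exp.mpr
      have hretξ : (lam ξ * (t:ℂ)).re = (lam ξ).re * t := by simp [Complex.mul_re]
      rw [hretξ]
      exact mul_le_mul_of_nonneg_right (hre ξ hξ) ht.le
    have hval : ‖Stmt18.val lam t P ξ‖
        ≤ (P.map (fun ws => ‖Stmt18.tval lam t ws ξ‖)).sum := by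
      rw [Stmt18.val]
      refine (Stmt18.norm_list_sum_le _).trans (le_of_eq ?_)
      rw [List.map_map]
      rfl
    calc ‖Complex.exp (lam ξ * t)‖ * ‖Stmt18.val lam t P ξ‖
        ≤ Real.exp (-Cstar * ‖ξ‖ ^ 2 * t)
            * (P.map (fun ws => ‖Stmt18.tval lam t ws ξ‖)).sum :=
          mul_le_mul hexp1 hval (norm_nonneg _) (Real.exp_pos _).le
      _ = (P.map (fun ws =>
            Real.exp (-Cstar * ‖ξ‖ ^ 2 * t) * ‖Stmt18.tval lam t ws ξ‖)).sum := by
          rw [List.sum_map_mul_left]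
      _ ≤ (P.map (fun _ => B * Real.exp (-(Cstar/2) * ‖ξ‖ ^ 2 * t)
            * ‖ξ‖ ^ (-((∑ i, α i : ℕ) : ℝ)))).sum := by
          apply List.sum_le_sum
          intro ws hws
          obtain ⟨hlen, hinv⟩ := hP ws hws
          exact Stmt18.termBound hC hCstar hder hα ws (by rw [hlen, hm])
            (fun w hw => ⟨(hinv w hw).1, (hinv w hw).2.1⟩) ht hξ
      _ = P.length * (B * Real.exp (-(Cstar/2) * ‖ξ‖ ^ 2 * t)
            * ‖ξ‖ ^ (-((∑ i, α i : ℕ) : ℝ))) := by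
          rw [List.map_const', List.sum_replicate, nsmul_eq_mul]
      _ ≤ (P.length * B + 1) * Real.exp (-(Cstar / 2) * ‖ξ‖ ^ 2 * t)
            * ‖ξ‖ ^ (-((∑ i, α i : ℕ) : ℝ)) := by
          have h1 : (P.length : ℝ) * B ≤ P.length * B + 1 := by linarith
          calc (P.length : ℝ) * (B * Real.exp (-(Cstar/2) * ‖ξ‖ ^ 2 * t)
                * ‖ξ‖ ^ (-((∑ i, α i : ℕ) : ℝ)))
              = ((P.length : ℝ) * B) * (Real.exp (-(Cstar/2) * ‖ξ‖ ^ 2 * t)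
                * ‖ξ‖ ^ (-((∑ i, α i : ℕ) : ℝ))) := by ring
            _ ≤ ((P.length : ℝ) * B + 1) * (Real.exp (-(Cstar/2) * ‖ξ‖ ^ 2 * t)
                * ‖ξ‖ ^ (-((∑ i, α i : ℕ) : ℝ))) :=
                mul_le_mul_of_nonneg_right h1 (by positivity)
            _ = (P.length * B + 1) * Real.exp (-(Cstar / 2) * ‖ξ‖ ^ 2 * t)
                * ‖ξ‖ ^ (-((∑ i, α i : ℕ) : ℝ)) := by ring
  choose g hg using key
  set S : Finset (Fin N → ℕ) :=
    Finset.image (fun f : Fin N → Fin (n+1) => fun i => (f i : ℕ)) Finset.univ with hS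
  refine ⟨1 + ∑ β ∈ S, g β, ?_, ?_⟩
  · have h0 : (0:ℝ) ≤ ∑ β ∈ S, g β := Finset.sum_nonneg fun β _ => (hg β).1.le
    linarith
  · intro α hα t ht ξ hξ
    have hmem : α ∈ S := by
      refine Finset.mem_image.mpr ⟨fun i => ⟨α i, ?_⟩, Finset.mem_univ _, rfl⟩
      have h1 : α i ≤ ∑ j, α j :=
        Finset.single_le_sum (f := α) (fun j _ => Nat.zero_le _) (Finset.mem_univ i)
      omega
    have hle : g α ≤ 1 + ∑ β ∈ S, g β := by
      have h1 : g α ≤ ∑ β ∈ S, g β :=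
        Finset.single_le_sum (fun β _ => (hg β).1.le) hmem
      linarith
    refine ((hg α).2 hα t ht ξ hξ).trans ?_
    calc g α * Real.exp (-(Cstar / 2) * ‖ξ‖ ^ 2 * t) * ‖ξ‖ ^ (-((∑ i, α i : ℕ) : ℝ))
        = g α * (Real.exp (-(Cstar / 2) * ‖ξ‖ ^ 2 * t)
            * ‖ξ‖ ^ (-((∑ i, α i : ℕ) : ℝ))) := by ring
      _ ≤ (1 + ∑ β ∈ S, g β) * (Real.exp (-(Cstar / 2) * ‖ξ‖ ^ 2 * t)
            * ‖ξ‖ ^ (-((∑ i, α i : ℕ) : ℝ))) :=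
            mul_le_mul_of_nonneg_right hle (by positivity)
      _ = (1 + ∑ β ∈ S, g β) * Real.exp (-(Cstar / 2) * ‖ξ‖ ^ 2 * t)
            * ‖ξ‖ ^ (-((∑ i, α i : ℕ) : ℝ)) := by ring
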